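/- Every countable concept class 𝒞 of measurable subsets of a probability space, with finite VC dimension d, is a uniform Glivenko–Cantelli class with respect to all probability measures, with sample complexity depending only on ε, δ, and d. -/

import Mathlib

/-!
By symmetrization, the expected uniform deviation of the empirical measure over a finite
subfamily is at most the expected uniform deviation between two independent samples. Swapping
the two points of any pair preserves the law of the double sample, so this equals its average
over all `2ⁿ` sign patterns. For a fixed double sample only the traces of the class on its
`2n` points matter; by Sauer–Shelah there are at most `(2n + 1) ^ d` of them, and Massart's
finite-class lemma bounds the sign average by `√(2 log (2 (2n + 1) ^ d) / n)`, whatever the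
measure. Markov's inequality turns this into a tail bound, and a countable class is the
increasing union of its finite initial segments.
-/

open MeasureTheory Set

/-- Empirical measure of the set `C` on a sample `σ` of size `n`. -/
noncomputable def empMeas {Ω : Type*} (n : ℕ) (σ : Fin n → Ω) (C : Set Ω) : ℝ :=
  (Nat.card {i : Fin n // σ i ∈ C} : ℝ) / n

/-- `n₀` is a uniform Glivenko–Cantelli sample-complexity bound for the class `𝒞`
at accuracy `ε` and confidence `δ`, with respect to the family `P` of measures
(outer probabilities are used for the possibly non-measurable event). -/
def GoodBound {Ω : Type*} [MeasurableSpace Ω] (P : Set (Measure Ω)) (ε δ : ℝ)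
    (𝒞 : Set (Set Ω)) (n₀ : ℕ) : Prop :=
  ∀ n : ℕ, n₀ ≤ n → ∀ μ ∈ P,
    (Measure.pi fun _ : Fin n => μ)
      {σ : Fin n → Ω | ε ≤ ⨆ C ∈ 𝒞, |empMeas n σ C - (μ C).toReal|} ≤ ENNReal.ofReal δ

def Shatters {Ω : Type*} (𝒞 : Set (Set Ω)) (F : Finset Ω) : Prop :=
  ∀ T ⊆ F, ∃ C ∈ 𝒞, C ∩ (F : Set Ω) = (T : Set Ω)

section EmpiricalMeasure

variable {Ω : Type*} {n : ℕ}

lemma empMeas_eq_sum (σ : Fin n → Ω) (C : Set Ω) :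
    empMeas n σ C = (∑ i, C.indicator 1 (σ i)) / n := by
  classical
  rw [empMeas, Nat.card_eq_fintype_card, Fintype.card_subtype, Finset.card_filter]
  push_cast
  simp only [Set.indicator_apply, Pi.one_apply]

lemma empMeas_nonneg (σ : Fin n → Ω) (C : Set Ω) : 0 ≤ empMeas n σ C := by
  unfold empMeas; positivity

lemma empMeas_le_one (σ : Fin n → Ω) (C : Set Ω) : empMeas n σ C ≤ 1 := by
  refine div_le_one_of_le₀ ?_ n.cast_nonneg
  exact_mod_cast (Finite.card_subtype_le _).trans (Nat.card_fin n).le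

lemma abs_empMeas_le_one (σ : Fin n → Ω) (C : Set Ω) : |empMeas n σ C| ≤ 1 :=
  (abs_of_nonneg (empMeas_nonneg σ C)).trans_le (empMeas_le_one σ C)

variable [MeasurableSpace Ω]

lemma measurable_empMeas {C : Set Ω} (hC : MeasurableSet C) :
    Measurable fun σ : Fin n → Ω => empMeas n σ C := by
  simp only [empMeas_eq_sum]
  exact (Finset.measurable_sum _ fun i _ =>
    (measurable_one.indicator hC).comp (measurable_pi_apply i)).div_const _

lemma integral_empMeas (μ : Measure Ω) [IsProbabilityMeasure μ] (hn : n ≠ 0) {C : Set Ω}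
    (hC : MeasurableSet C) :
    ∫ σ, empMeas n σ C ∂(Measure.pi fun _ : Fin n => μ) = (μ C).toReal := by
  have hind : Integrable (C.indicator (1 : Ω → ℝ)) μ := (integrable_const 1).indicator hC
  simp only [empMeas_eq_sum]
  rw [integral_div, integral_finsetSum _ fun i _ => integrable_comp_eval hind]
  simp only [integral_comp_eval (μ := fun _ : Fin n => μ) hind.1, integral_indicator_one hC,
    Finset.sum_const, Finset.card_univ, Fintype.card_fin, nsmul_eq_mul, measureReal_def]
  field_simp

end EmpiricalMeasure

-- A real `⨆` over an empty family is `0`, whence the sign condition on `a`.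
lemma Real.exists_mem_lt_of_lt_biSup {β : Type*} {s : Set β} {X : β → ℝ} {a : ℝ} (ha : 0 ≤ a)
    (h : a < ⨆ x ∈ s, X x) : ∃ x ∈ s, a < X x := by
  by_contra! hle
  exact h.not_ge (Real.iSup_le (fun x => Real.iSup_le (hle x) ha) ha)

section Symmetrization

variable {α J : Type*} [MeasurableSpace α] [Fintype J] [Nonempty J]

lemma integrable_iSup_abs {P : Measure α} [IsFiniteMeasure P] {h : J → α → ℝ}
    (hm : ∀ j, Measurable (h j)) {c : ℝ} (hc : ∀ j x, |h j x| ≤ c) :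
    Integrable (fun x => ⨆ j, |h j x|) P := by
  refine .of_bound (Measurable.iSup fun j => (hm j).abs).aestronglyMeasurable c
    (ae_of_all _ fun x => ?_)
  rw [Real.norm_eq_abs, abs_of_nonneg (Real.iSup_nonneg fun j => abs_nonneg _)]
  exact ciSup_le fun j => hc j x

lemma abs_sub_le_of_abs_le {a b c : ℝ} (ha : |a| ≤ c) (hb : |b| ≤ c) : |a - b| ≤ 2 * c := by
  linarith [abs_sub a b]

lemma integral_iSup_abs_sub_integral_le {P : Measure α} [IsProbabilityMeasure P]
    {f : J → α → ℝ} (hf : ∀ j, Measurable (f j)) {c : ℝ} (hc : ∀ j x, |f j x| ≤ c) :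
    ∫ x, ⨆ j, |f j x - ∫ y, f j y ∂P| ∂P ≤ ∫ z, ⨆ j, |f j z.1 - f j z.2| ∂(P.prod P) := by
  have hint : ∀ j, Integrable (f j) P := fun j =>
    .of_bound (hf j).aestronglyMeasurable c (ae_of_all _ (hc j))
  have hsec : ∀ x, Integrable (fun y => ⨆ j, |f j x - f j y|) P := fun x =>
    integrable_iSup_abs (fun j => measurable_const.sub (hf j))
      fun j y => abs_sub_le_of_abs_le (hc j x) (hc j y)
  have hD : Integrable (fun z : α × α => ⨆ j, |f j z.1 - f j z.2|) (P.prod P) :=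
    integrable_iSup_abs
      (fun j => ((hf j).comp measurable_fst).sub ((hf j).comp measurable_snd)) fun j z =>
        abs_sub_le_of_abs_le (hc j z.1) (hc j z.2)
  have hpoint : ∀ x, ⨆ j, |f j x - ∫ y, f j y ∂P| ≤ ∫ y, ⨆ j, |f j x - f j y| ∂P := by
    refine fun x => ciSup_le fun j => ?_
    calc |f j x - ∫ y, f j y ∂P| = |∫ y, (f j x - f j y) ∂P| := by
          rw [integral_sub (integrable_const _) (hint j), integral_const, probReal_univ,
            one_smul]
      _ ≤ ∫ y, |f j x - f j y| ∂P := abs_integral_le_integral_abs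
      _ ≤ ∫ y, ⨆ j, |f j x - f j y| ∂P :=
          integral_mono_of_nonneg (ae_of_all _ fun _ => abs_nonneg _) (hsec x)
            (ae_of_all _ fun y =>
              le_ciSup (f := fun j => |f j x - f j y|) (Finite.bddAbove_range _) j)
  calc ∫ x, ⨆ j, |f j x - ∫ y, f j y ∂P| ∂P
      ≤ ∫ x, ∫ y, ⨆ j, |f j x - f j y| ∂P ∂P :=
        integral_mono_of_nonneg (ae_of_all _ fun _ => Real.iSup_nonneg fun _ => abs_nonneg _)
          hD.integral_prod_left (ae_of_all _ hpoint)
    _ = ∫ z, ⨆ j, |f j z.1 - f j z.2| ∂(P.prod P) := (integral_prod _ hD).symm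

end Symmetrization

section Rademacher

open Real

noncomputable def signVectors (n : ℕ) : Finset (Fin n → ℝ) := Fintype.piFinset fun _ => {-1, 1}

variable {n : ℕ}

lemma card_signVectors (n : ℕ) : (signVectors n).card = 2 ^ n := by
  rw [signVectors, Fintype.card_piFinset_const, Finset.card_pair (by norm_num)]

lemma exp_average_signVectors_le (X : (Fin n → ℝ) → ℝ) :
    exp ((∑ ε ∈ signVectors n, X ε) / 2 ^ n) ≤ (∑ ε ∈ signVectors n, exp (X ε)) / 2 ^ n := by
  have h := convexOn_exp.map_sum_le (t := signVectors n) (w := fun _ => ((2 : ℝ) ^ n)⁻¹)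
    (p := X) (fun _ _ => by positivity) (by simp [card_signVectors]) (fun _ _ => mem_univ _)
  simpa only [smul_eq_mul, inv_mul_eq_div, Finset.sum_div] using h

lemma sum_signVectors_exp_le (a : Fin n → ℝ) :
    ∑ ε ∈ signVectors n, exp (∑ i, ε i * a i) ≤ 2 ^ n * exp (∑ i, a i ^ 2 / 2) := by
  calc ∑ ε ∈ signVectors n, exp (∑ i, ε i * a i)
      = ∏ i, ∑ s ∈ ({-1, 1} : Finset ℝ), exp (s * a i) := by
        rw [Finset.prod_univ_sum]
        simp only [signVectors, exp_sum]
    _ = ∏ i, 2 * cosh (a i) := Finset.prod_congr rfl fun i _ => by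
        rw [Finset.sum_pair (by norm_num), cosh_eq]
        ring_nf
    _ ≤ ∏ i, 2 * exp (a i ^ 2 / 2) :=
        Finset.prod_le_prod (fun i _ => by positivity)
          fun i _ => by gcongr; exact cosh_le_exp_half_sq _
    _ = 2 ^ n * exp (∑ i, a i ^ 2 / 2) := by
        rw [Finset.prod_mul_distrib, exp_sum]
        simp

variable {J : Type*} [Fintype J] [Nonempty J]

lemma exp_mul_iSup_abs_le (w : J → Fin n → ℝ) (t : ℝ) (ε : Fin n → ℝ) :
    exp (t * ⨆ j, |∑ i, ε i * w j i|) ≤ ∑ v ∈ Finset.univ.image w,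
      (exp (∑ i, ε i * (t * v i)) + exp (∑ i, ε i * (-t * v i))) := by
  obtain ⟨j, hj⟩ := exists_eq_ciSup_of_finite (f := fun j => |∑ i, ε i * w j i|)
  have hsum : ∀ s : ℝ, ∑ i, ε i * (s * w j i) = s * ∑ i, ε i * w j i := fun s => by
    rw [Finset.mul_sum]; exact Finset.sum_congr rfl fun i _ => by ring
  rw [← hj]
  refine le_trans ?_ (Finset.single_le_sum (fun v _ => by positivity)
    (Finset.mem_image_of_mem w (Finset.mem_univ j)))
  rw [hsum, hsum]
  rcases abs_cases (∑ i, ε i * w j i) with ⟨h, -⟩ | ⟨h, -⟩ <;> rw [h]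
  · linarith [exp_pos (-t * ∑ i, ε i * w j i)]
  · rw [mul_neg, ← neg_mul]; linarith [exp_pos (t * ∑ i, ε i * w j i)]

lemma sum_signVectors_exp_mul_iSup_abs_le (w : J → Fin n → ℝ) (hw : ∀ j i, |w j i| ≤ 1)
    (t : ℝ) : ∑ ε ∈ signVectors n, exp (t * ⨆ j, |∑ i, ε i * w j i|)
      ≤ 2 ^ n * (2 * (Finset.univ.image w).card * exp (n * t ^ 2 / 2)) := by
  have hv : ∀ v ∈ Finset.univ.image w, ∀ s : ℝ,
      ∑ ε ∈ signVectors n, exp (∑ i, ε i * (s * v i)) ≤ 2 ^ n * exp (n * s ^ 2 / 2) := by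
    intro v hv s
    obtain ⟨j, -, rfl⟩ := Finset.mem_image.1 hv
    refine (sum_signVectors_exp_le _).trans ?_
    gcongr
    calc ∑ i, (s * w j i) ^ 2 / 2 ≤ ∑ _i : Fin n, s ^ 2 / 2 := Finset.sum_le_sum fun i _ => by
          rw [mul_pow]
          gcongr
          exact mul_le_of_le_one_right (sq_nonneg s) ((sq_le_one_iff_abs_le_one _).2 (hw j i))
      _ = n * s ^ 2 / 2 := by simp [mul_div_assoc]
  calc ∑ ε ∈ signVectors n, exp (t * ⨆ j, |∑ i, ε i * w j i|)
      ≤ ∑ v ∈ Finset.univ.image w, ∑ ε ∈ signVectors n,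
          (exp (∑ i, ε i * (t * v i)) + exp (∑ i, ε i * (-t * v i))) := by
        rw [Finset.sum_comm]
        exact Finset.sum_le_sum fun ε _ => exp_mul_iSup_abs_le w t ε
    _ ≤ ∑ _v ∈ Finset.univ.image w, 2 ^ n * (2 * exp (n * t ^ 2 / 2)) :=
        Finset.sum_le_sum fun v hv' => by
          have h₁ := hv v hv' t
          have h₂ := hv v hv' (-t)
          rw [neg_sq] at h₂
          rw [Finset.sum_add_distrib]
          linarith
    _ = 2 ^ n * (2 * (Finset.univ.image w).card * exp (n * t ^ 2 / 2)) := by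
        rw [Finset.sum_const, nsmul_eq_mul]; ring

lemma le_sqrt_of_forall_mul_le {A L m : ℝ} (hm : 0 < m)
    (h : ∀ t, 0 ≤ t → t * A ≤ L + m * t ^ 2 / 2) : A ≤ √(2 * m * L) := by
  rcases le_or_gt A 0 with hA | hA
  · exact hA.trans (sqrt_nonneg _)
  -- `t = A / m` minimises the right-hand side minus the left
  have key := h (A / m) (by positivity)
  have hL : A ^ 2 ≤ 2 * m * L := by
    field_simp at key
    nlinarith
  exact (le_sqrt hA.le (by nlinarith)).2 hL

/-- Massart's finite class lemma. -/
theorem sum_signVectors_iSup_abs_le (w : J → Fin n → ℝ) (hw : ∀ j i, |w j i| ≤ 1) :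
    (∑ ε ∈ signVectors n, ⨆ j, |∑ i, ε i * w j i|) / 2 ^ n
      ≤ √(2 * n * log (2 * (Finset.univ.image w).card)) := by
  rcases Nat.eq_zero_or_pos n with rfl | hn
  · simp
  have hV : (0 : ℝ) < (Finset.univ.image w).card := by
    exact_mod_cast (Finset.univ_nonempty.image w).card_pos
  refine le_sqrt_of_forall_mul_le (by exact_mod_cast hn) fun t _ => ?_
  rw [← exp_le_exp, exp_add, exp_log (by positivity), mul_div_assoc', Finset.mul_sum]
  calc exp ((∑ ε ∈ signVectors n, t * ⨆ j, |∑ i, ε i * w j i|) / 2 ^ n)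
      ≤ (∑ ε ∈ signVectors n, exp (t * ⨆ j, |∑ i, ε i * w j i|)) / 2 ^ n :=
        exp_average_signVectors_le _
    _ ≤ 2 ^ n * (2 * (Finset.univ.image w).card * exp (n * t ^ 2 / 2)) / 2 ^ n := by
        gcongr; exact sum_signVectors_exp_mul_iSup_abs_le w hw t
    _ = 2 * (Finset.univ.image w).card * exp (n * t ^ 2 / 2) := by field_simp

end Rademacher

section SauerShelah

variable {Ω : Type*} {𝒞 : Set (Set Ω)} {d : ℕ}

lemma sum_range_choose_le_pow (N d : ℕ) :
    ∑ k ∈ Finset.range (d + 1), N.choose k ≤ (N + 1) ^ d := by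
  rw [add_pow]
  refine Finset.sum_le_sum fun k hk => ?_
  rw [one_pow, mul_one]
  exact (Nat.choose_le_pow N k).trans
    (Nat.le_mul_of_pos_right _ (Nat.choose_pos (Nat.lt_succ_iff.1 (Finset.mem_range.1 hk))))

lemma shatters_of_shatters_traces [DecidableEq Ω] {F S : Finset Ω} {𝒜 : Finset (Finset Ω)}
    (h𝒜 : ∀ A ∈ 𝒜, ∃ C ∈ 𝒞, C ∩ F = A) (hS : 𝒜.Shatters S) : Shatters 𝒞 S ∧ S ⊆ F := by
  have hSF : S ⊆ F := by
    obtain ⟨A, hA, hSA⟩ := hS.exists_superset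
    obtain ⟨C, -, hCA⟩ := h𝒜 A hA
    exact hSA.trans (Finset.coe_subset.1 (hCA ▸ Set.inter_subset_right))
  refine ⟨fun T hT => ?_, hSF⟩
  obtain ⟨A, hA, hSA⟩ := hS hT
  obtain ⟨C, hC, hCA⟩ := h𝒜 A hA
  refine ⟨C, hC, ?_⟩
  rw [← hSA, Finset.coe_inter, ← hCA, ← Set.inter_eq_left.2 (Finset.coe_subset.2 hSF)]
  ext; simp only [Set.mem_inter_iff]; tauto

/-- The Sauer–Shelah lemma, in the weak form `(|F| + 1) ^ d`. -/
lemma card_traces_le [DecidableEq Ω] (hvc : ∀ F : Finset Ω, Shatters 𝒞 F → F.card ≤ d)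
    (F : Finset Ω) {𝒜 : Finset (Finset Ω)} (h𝒜 : ∀ A ∈ 𝒜, ∃ C ∈ 𝒞, C ∩ F = A) :
    𝒜.card ≤ (F.card + 1) ^ d := by
  have hsub : 𝒜.shatterer ⊆ (Finset.range (d + 1)).biUnion (F.powersetCard ·) := by
    intro S hS
    obtain ⟨hS𝒞, hSF⟩ := shatters_of_shatters_traces h𝒜 (Finset.mem_shatterer.1 hS)
    exact Finset.mem_biUnion.2 ⟨S.card, Finset.mem_range.2 (Nat.lt_succ_of_le (hvc S hS𝒞)),
      Finset.mem_powersetCard.2 ⟨hSF, rfl⟩⟩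
  calc 𝒜.card ≤ 𝒜.shatterer.card := 𝒜.card_le_card_shatterer
    _ ≤ ∑ k ∈ Finset.range (d + 1), (F.powersetCard k).card :=
        (Finset.card_le_card hsub).trans Finset.card_biUnion_le
    _ ≤ (F.card + 1) ^ d := by
        simp only [Finset.card_powersetCard]; exact sum_range_choose_le_pow _ _

open Classical in
lemma card_image_preimage_le (hvc : ∀ F : Finset Ω, Shatters 𝒞 F → F.card ≤ d)
    {ι J : Type*} [Fintype ι] [Fintype J] (x : ι → Ω) (g : J → Set Ω) (hg : ∀ j, g j ∈ 𝒞) :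
    (Finset.univ.image fun j => x ⁻¹' g j).card ≤ (Fintype.card ι + 1) ^ d := by
  set F := Finset.univ.image x
  have htrace : (fun j => x ⁻¹' g j)
      = (fun A : Finset Ω => x ⁻¹' A) ∘ fun j => F.filter (· ∈ g j) := by
    ext j k
    simp [F]
  calc (Finset.univ.image fun j => x ⁻¹' g j).card
      ≤ (Finset.univ.image fun j => F.filter (· ∈ g j)).card := by
        rw [htrace, ← Finset.image_image]; exact Finset.card_image_le
    _ ≤ (F.card + 1) ^ d := card_traces_le hvc F fun A hA => by
        obtain ⟨j, -, rfl⟩ := Finset.mem_image.1 hA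
        exact ⟨g j, hg j, by ext; simp [and_comm]⟩
    _ ≤ (Fintype.card ι + 1) ^ d := by
        gcongr; exact Finset.card_image_le.trans Finset.card_univ.le

end SauerShelah

section Swaps

variable {α : Type*} {n : ℕ}

noncomputable def signSwap (ε : Fin n → ℝ) (τ : Fin n → α × α) : Fin n → α × α :=
  fun i => if ε i = 1 then τ i else (τ i).swap

lemma empMeas_signSwap_sub {ε : Fin n → ℝ} (hε : ε ∈ signVectors n) (τ : Fin n → α × α)
    (C : Set α) :
    empMeas n (fun i => (signSwap ε τ i).1) C - empMeas n (fun i => (signSwap ε τ i).2) C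
      = (∑ i, ε i * (C.indicator 1 (τ i).1 - C.indicator 1 (τ i).2)) / n := by
  rw [empMeas_eq_sum, empMeas_eq_sum, ← sub_div, ← Finset.sum_sub_distrib]
  congr 1
  refine Finset.sum_congr rfl fun i _ => ?_
  have hεi : ε i = -1 ∨ ε i = 1 := by simpa [signVectors] using Fintype.mem_piFinset.1 hε i
  rcases hεi with h | h <;> norm_num [signSwap, h]

variable [MeasurableSpace α]

lemma measurePreserving_signSwap (μ : Measure α) [SigmaFinite μ] (ε : Fin n → ℝ) :
    MeasurePreserving (signSwap ε) (Measure.pi fun _ => μ.prod μ)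
      (Measure.pi fun _ => μ.prod μ) := by
  have h := measurePreserving_pi (fun _ : Fin n => μ.prod μ) (fun _ => μ.prod μ)
    (f := fun i => if ε i = 1 then id else Prod.swap) fun i => by
      split_ifs
      exacts [.id _, Measure.measurePreserving_swap]
  convert h using 1
  ext τ i <;> simp only [signSwap] <;> split_ifs <;> rfl

lemma integral_eq_integral_average_signSwap (μ : Measure α) [SigmaFinite μ]
    {F : (Fin n → α × α) → ℝ} (hF : Integrable F (Measure.pi fun _ => μ.prod μ)) :
    ∫ τ, F τ ∂(Measure.pi fun _ => μ.prod μ)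
      = ∫ τ, (∑ ε ∈ signVectors n, F (signSwap ε τ)) / 2 ^ n
          ∂(Measure.pi fun _ => μ.prod μ) := by
  have hinv : ∀ ε : Fin n → ℝ, ∫ τ, F (signSwap ε τ) ∂(Measure.pi fun _ => μ.prod μ)
      = ∫ τ, F τ ∂(Measure.pi fun _ => μ.prod μ) := fun ε => by
    have hmp := measurePreserving_signSwap μ ε
    rw [← integral_map hmp.measurable.aemeasurable (by rw [hmp.map_eq]; exact hF.1), hmp.map_eq]
  have hint : ∀ ε : Fin n → ℝ, Integrable (fun τ => F (signSwap ε τ))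
      (Measure.pi fun _ => μ.prod μ) := fun ε =>
    (measurePreserving_signSwap μ ε).integrable_comp_of_integrable hF
  rw [integral_div, integral_finsetSum _ fun ε _ => hint ε,
    Finset.sum_congr rfl fun ε _ => hinv ε, Finset.sum_const, card_signVectors, nsmul_eq_mul,
    Nat.cast_pow, Nat.cast_ofNat]
  field_simp

end Swaps

section UniformDeviation

open Real

variable {Ω : Type*} {𝒞 : Set (Set Ω)} {d n : ℕ}

noncomputable def vcRate (d n : ℕ) : ℝ := √(2 * log (2 * (2 * n + 1) ^ d) / n)

lemma sqrt_two_mul_log_div_le_vcRate {n : ℕ} (hn : n ≠ 0) {K : ℕ} (hK₀ : 0 < K)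
    (hK : K ≤ (2 * n + 1) ^ d) : √(2 * n * log (2 * K)) / n ≤ vcRate d n := by
  have hn' : (0 : ℝ) < n := by positivity
  have hK' : (1 : ℝ) ≤ K := by exact_mod_cast hK₀
  have hL : 0 ≤ log (2 * K) := log_nonneg (by linarith)
  have hL' : 0 ≤ log (2 * (2 * n + 1 : ℝ) ^ d) :=
    log_nonneg (by linarith [one_le_pow₀ (n := d) (by linarith : (1 : ℝ) ≤ 2 * n + 1)])
  rw [vcRate, le_sqrt (by positivity) (by positivity), div_pow, sq_sqrt (by positivity)]
  calc 2 * n * log (2 * K) / n ^ 2 = 2 * log (2 * K) / n := by field_simp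
    _ ≤ 2 * log (2 * (2 * n + 1) ^ d) / n := by
        gcongr
        exact_mod_cast hK

lemma average_signSwap_iSup_le (hvc : ∀ F : Finset Ω, Shatters 𝒞 F → F.card ≤ d) (hn : n ≠ 0)
    {J : Type*} [Fintype J] [Nonempty J] {g : J → Set Ω} (hg : ∀ j, g j ∈ 𝒞)
    (τ : Fin n → Ω × Ω) :
    (∑ ε ∈ signVectors n, ⨆ j, |empMeas n (fun i => (signSwap ε τ i).1) (g j)
      - empMeas n (fun i => (signSwap ε τ i).2) (g j)|) / 2 ^ n ≤ vcRate d n := by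
  classical
  set w : J → Fin n → ℝ := fun j i => (g j).indicator 1 (τ i).1 - (g j).indicator 1 (τ i).2
  have hw : ∀ j i, |w j i| ≤ 1 := fun j i => by
    simp only [w, Set.indicator_apply]; split_ifs <;> norm_num
  have hsum : ∀ ε ∈ signVectors n, ⨆ j, |empMeas n (fun i => (signSwap ε τ i).1) (g j)
      - empMeas n (fun i => (signSwap ε τ i).2) (g j)| = (⨆ j, |∑ i, ε i * w j i|) / n := by
    intro ε hε
    simp only [empMeas_signSwap_sub hε, abs_div, Nat.abs_cast]
    simp only [div_eq_mul_inv]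
    exact (Real.iSup_mul_of_nonneg (inv_nonneg.2 n.cast_nonneg) _).symm
  have hcard : (Finset.univ.image w).card ≤ (2 * n + 1) ^ d := by
    let x : Fin n ⊕ Fin n → Ω := Sum.elim (fun i => (τ i).1) (fun i => (τ i).2)
    have hfac : w = (fun P : Set (Fin n ⊕ Fin n) => fun i =>
        P.indicator (1 : Fin n ⊕ Fin n → ℝ) (.inl i) - P.indicator 1 (.inr i)) ∘
          fun j => x ⁻¹' g j := by
      ext j i
      simp [w, x, Set.indicator_apply]
    calc (Finset.univ.image w).card ≤ (Finset.univ.image fun j => x ⁻¹' g j).card := by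
          rw [hfac, ← Finset.image_image]; exact Finset.card_image_le
      _ ≤ (Fintype.card (Fin n ⊕ Fin n) + 1) ^ d := card_image_preimage_le hvc x g hg
      _ = (2 * n + 1) ^ d := by simp [two_mul]
  rw [Finset.sum_congr rfl hsum, ← Finset.sum_div, div_right_comm]
  calc (∑ ε ∈ signVectors n, ⨆ j, |∑ i, ε i * w j i|) / 2 ^ n / n
      ≤ √(2 * n * log (2 * (Finset.univ.image w).card)) / n := by
        gcongr; exact sum_signVectors_iSup_abs_le w hw
    _ ≤ vcRate d n := sqrt_two_mul_log_div_le_vcRate hn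
        (Finset.univ_nonempty.image w).card_pos hcard

variable [MeasurableSpace Ω]

theorem integral_iSup_abs_empMeas_sub_le (μ : Measure Ω) [IsProbabilityMeasure μ]
    (hvc : ∀ F : Finset Ω, Shatters 𝒞 F → F.card ≤ d) (hn : n ≠ 0)
    {J : Type*} [Fintype J] [Nonempty J] {g : J → Set Ω} (hg𝒞 : ∀ j, g j ∈ 𝒞)
    (hg : ∀ j, MeasurableSet (g j)) :
    ∫ σ, ⨆ j, |empMeas n σ (g j) - (μ (g j)).toReal| ∂(Measure.pi fun _ => μ)
      ≤ vcRate d n := by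
  set D : (Fin n → Ω) × (Fin n → Ω) → ℝ :=
    fun z => ⨆ j, |empMeas n z.1 (g j) - empMeas n z.2 (g j)|
  have hmeas : ∀ j, Measurable fun σ : Fin n → Ω => empMeas n σ (g j) :=
    fun j => measurable_empMeas (hg j)
  have hD : Integrable D ((Measure.pi fun _ => μ).prod (Measure.pi fun _ => μ)) :=
    integrable_iSup_abs
      (fun j => ((hmeas j).comp measurable_fst).sub ((hmeas j).comp measurable_snd)) fun j z =>
        abs_sub_le_of_abs_le (abs_empMeas_le_one _ _) (abs_empMeas_le_one _ _)
  have hghost := integral_iSup_abs_sub_integral_le (P := Measure.pi fun _ : Fin n => μ) hmeas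
    fun j σ => abs_empMeas_le_one σ (g j)
  simp only [integral_empMeas μ hn (hg _)] at hghost
  have hmp := measurePreserving_arrowProdEquivProdArrow Ω Ω (Fin n) (fun _ => μ) (fun _ => μ)
  calc ∫ σ, ⨆ j, |empMeas n σ (g j) - (μ (g j)).toReal| ∂(Measure.pi fun _ => μ)
      ≤ ∫ z, D z ∂((Measure.pi fun _ => μ).prod (Measure.pi fun _ => μ)) := hghost
    _ = ∫ τ, D (MeasurableEquiv.arrowProdEquivProdArrow Ω Ω (Fin n) τ)
          ∂(Measure.pi fun _ => μ.prod μ) := (hmp.integral_comp' D).symm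
    _ = ∫ τ, (∑ ε ∈ signVectors n,
            D (MeasurableEquiv.arrowProdEquivProdArrow Ω Ω (Fin n) (signSwap ε τ))) / 2 ^ n
          ∂(Measure.pi fun _ => μ.prod μ) :=
        integral_eq_integral_average_signSwap μ (hmp.integrable_comp_of_integrable hD)
    _ ≤ ∫ _τ, vcRate d n ∂(Measure.pi fun _ => μ.prod μ) :=
        integral_mono_of_nonneg
          (ae_of_all _ fun τ => div_nonneg (Finset.sum_nonneg fun ε _ =>
            Real.iSup_nonneg fun j => abs_nonneg _) (by positivity))
          (integrable_const _) (ae_of_all _ fun τ => average_signSwap_iSup_le hvc hn hg𝒞 τ)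
    _ = vcRate d n := by simp

theorem measure_le_iSup_abs_empMeas_sub_le (μ : Measure Ω) [IsProbabilityMeasure μ]
    (hvc : ∀ F : Finset Ω, Shatters 𝒞 F → F.card ≤ d) (hn : n ≠ 0)
    {J : Type*} [Fintype J] [Nonempty J] {g : J → Set Ω} (hg𝒞 : ∀ j, g j ∈ 𝒞)
    (hg : ∀ j, MeasurableSet (g j)) {a : ℝ} (ha : 0 < a) :
    Measure.pi (fun _ => μ) {σ | a ≤ ⨆ j, |empMeas n σ (g j) - (μ (g j)).toReal|}
      ≤ ENNReal.ofReal (vcRate d n / a) := by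
  have hG : Integrable (fun σ => ⨆ j, |empMeas n σ (g j) - (μ (g j)).toReal|)
      (Measure.pi fun _ : Fin n => μ) :=
    integrable_iSup_abs (fun j => (measurable_empMeas (hg j)).sub measurable_const)
      fun j σ => abs_sub_le_of_abs_le (abs_empMeas_le_one σ _)
        (by rw [abs_of_nonneg ENNReal.toReal_nonneg, ← measureReal_def]
            exact measureReal_le_one)
  have hmarkov := mul_meas_ge_le_integral_of_nonneg
    (ae_of_all _ fun σ => Real.iSup_nonneg fun j => abs_nonneg _) hG a
  rw [← ofReal_measureReal]
  exact ENNReal.ofReal_le_ofReal ((le_div_iff₀' ha).2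
    (hmarkov.trans (integral_iSup_abs_empMeas_sub_le μ hvc hn hg𝒞 hg)))

theorem measure_le_biSup_abs_empMeas_sub_le (μ : Measure Ω) [IsProbabilityMeasure μ]
    (h𝒞 : 𝒞.Countable) (hmeas : ∀ C ∈ 𝒞, MeasurableSet C)
    (hvc : ∀ F : Finset Ω, Shatters 𝒞 F → F.card ≤ d) (hn : n ≠ 0) {ε : ℝ} (hε : 0 < ε) :
    Measure.pi (fun _ => μ) {σ | ε ≤ ⨆ C ∈ 𝒞, |empMeas n σ C - (μ C).toReal|}
      ≤ ENNReal.ofReal (2 * vcRate d n / ε) := by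
  -- The supremum over `𝒞` need not be attained, hence the margin `ε / 2` left for the finite
  -- initial segments of an enumeration of `𝒞`.
  have hwitness : ∀ σ : Fin n → Ω, ε ≤ ⨆ C ∈ 𝒞, |empMeas n σ C - (μ C).toReal| →
      ∃ C ∈ 𝒞, ε / 2 < |empMeas n σ C - (μ C).toReal| := fun σ hσ =>
    Real.exists_mem_lt_of_lt_biSup (half_pos hε).le ((half_lt_self hε).trans_le hσ)
  rcases 𝒞.eq_empty_or_nonempty with rfl | hne
  · refine (measure_mono_null (fun σ hσ => ?_) measure_empty).trans_le zero_le
    obtain ⟨C, hC, -⟩ := hwitness σ hσ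
    exact hC.elim
  obtain ⟨f, rfl⟩ := h𝒞.exists_eq_range hne
  set E : ℕ → Set (Fin n → Ω) := fun m =>
    {σ | ε / 2 ≤ ⨆ j : Fin (m + 1), |empMeas n σ (f j) - (μ (f j)).toReal|}
  have hmono : Monotone E := fun a b hab σ (hσ : ε / 2 ≤ _) => hσ.trans <| ciSup_le fun j =>
    le_ciSup_of_le (Finite.bddAbove_range _) (Fin.castLE (by omega) j) le_rfl
  have hsub : {σ | ε ≤ ⨆ C ∈ range f, |empMeas n σ C - (μ C).toReal|} ⊆ ⋃ m, E m := by
    intro σ hσ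
    obtain ⟨_, ⟨k, rfl⟩, hk⟩ := hwitness σ hσ
    exact mem_iUnion.2
      ⟨k, hk.le.trans (le_ciSup_of_le (Finite.bddAbove_range _) (Fin.last k) le_rfl)⟩
  calc Measure.pi (fun _ => μ) {σ | ε ≤ ⨆ C ∈ range f, |empMeas n σ C - (μ C).toReal|}
      ≤ Measure.pi (fun _ => μ) (⋃ m, E m) := measure_mono hsub
    _ = ⨆ m, Measure.pi (fun _ => μ) (E m) := hmono.measure_iUnion
    _ ≤ ENNReal.ofReal (2 * vcRate d n / ε) := iSup_le fun m =>
        (measure_le_iSup_abs_empMeas_sub_le μ hvc hn (g := fun j : Fin (m + 1) => f j)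
          (fun j => mem_range_self _) (fun j => hmeas _ (mem_range_self _))
          (half_pos hε)).trans_eq (by rw [div_div_eq_mul_div, mul_comm])

end UniformDeviation

section SampleSize

open Real Filter Topology

lemma tendsto_vcRate (d : ℕ) : Tendsto (vcRate d) atTop (𝓝 0) := by
  have hlog : Tendsto (fun n : ℕ => log (2 * n + 1) / n) atTop (𝓝 0) := by
    have h := (tendsto_pow_log_div_mul_add_atTop (1 / 2) (-1 / 2) 1 (by norm_num)).comp
      (tendsto_atTop_add_const_right _ 1
        (tendsto_natCast_atTop_atTop.const_mul_atTop (two_pos : (0 : ℝ) < 2)))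
    refine h.congr fun n => ?_
    simp only [Function.comp, pow_one]
    ring_nf
  have h := (((tendsto_inv_atTop_zero.comp tendsto_natCast_atTop_atTop).const_mul (log 2)).add
    (hlog.const_mul (d : ℝ))).const_mul 2 |>.sqrt
  simp only [mul_zero, add_zero, sqrt_zero] at h
  refine h.congr fun n => ?_
  rw [vcRate, log_mul two_ne_zero (by positivity), log_pow]
  simp only [Function.comp]
  ring_nf

noncomputable def vcSampleSize (d : ℕ) (ε δ : ℝ) : ℕ :=
  sInf {N | ∀ n ≥ N, n ≠ 0 ∧ 2 * vcRate d n / ε ≤ δ}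

lemma vcSampleSize_spec {d n : ℕ} {ε δ : ℝ} (hε : 0 < ε) (hδ : 0 < δ)
    (hn : vcSampleSize d ε δ ≤ n) : n ≠ 0 ∧ 2 * vcRate d n / ε ≤ δ := by
  have hev := ((tendsto_vcRate d).eventually (ge_mem_nhds (by positivity : 0 < ε * δ / 2))).and
    (eventually_ne_atTop 0)
  obtain ⟨N, hN⟩ := eventually_atTop.1 hev
  refine Nat.sInf_mem (s := {N | ∀ n ≥ N, n ≠ 0 ∧ 2 * vcRate d n / ε ≤ δ})
    ⟨N, fun n hn => ⟨(hN n hn).2, ?_⟩⟩ n hn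
  rw [div_le_iff₀ hε]
  linarith [(hN n hn).1]

end SampleSize

/-- there is a sample-complexity function depending only on `ε`, `δ`
and `d` such that every countable concept class of measurable sets with VC dimension
at most `d` is uniform Glivenko–Cantelli, over all probability measures, with that
sample complexity. -/
theorem countable_vc_class_ugc :
    ∃ s : ℝ → ℝ → ℕ → ℕ,
      ∀ (Ω : Type) (_ : MeasurableSpace Ω) (𝒞 : Set (Set Ω)) (d : ℕ),
        𝒞.Countable → (∀ C ∈ 𝒞, MeasurableSet C) →
        (∀ F : Finset Ω, Shatters 𝒞 F → F.card ≤ d) →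
        ∀ ε : ℝ, 0 < ε → ∀ δ : ℝ, 0 < δ → ∀ n : ℕ, s ε δ d ≤ n →
          ∀ μ : Measure Ω, IsProbabilityMeasure μ →
            (Measure.pi fun _ : Fin n => μ)
              {σ : Fin n → Ω | ε ≤ ⨆ C ∈ 𝒞, |empMeas n σ C - (μ C).toReal|} ≤
              ENNReal.ofReal δ := by
  refine ⟨fun ε δ d => vcSampleSize d ε δ, fun Ω _ 𝒞 d h𝒞 hmeas hvc ε hε δ hδ n hn μ _ => ?_⟩
  obtain ⟨hn₀, hrate⟩ := vcSampleSize_spec hε hδ hn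
  exact (measure_le_biSup_abs_empMeas_sub_le μ h𝒞 hmeas hvc hn₀ hε).trans
    (ENNReal.ofReal_le_ofReal hrate)
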